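/- Let f₀ : ℝ → ℝ be defined by f₀(x) = 2/(e^{πx} + e^{−πx}). Then f₀ is its own Fourier transform: for every ξ ∈ ℝ, ∫_ℝ f₀(x) e^{−2πiξx} dx = f₀(ξ). -/

import Mathlib

/-!
Via Mellin's substitution `t = e^{-u}`, the Fourier transform of `sech (π x)` at `ξ` is the Mellin
transform of `2 / (1 + t^{2π})` at `π + 2πiξ`, i.e. (rescaling `t ↦ t^{2π}`) of `1 / (1 + t)` at
`s = 1/2 + iξ`. The substitution `x = t / (1 + t)` turns the latter into the beta integral
`B(s, 1 - s) = Γ(s) Γ(1 - s) = π / sin (π s)`, and `sin (π (1/2 + iξ)) = cosh (π ξ)`.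
-/

open MeasureTheory Real Set
open scoped FourierTransform

lemma Complex.betaIntegral_eq_setIntegral_Ioo (u v : ℂ) :
    Complex.betaIntegral u v =
      ∫ x in Ioo (0 : ℝ) 1, (x : ℂ) ^ (u - 1) * (1 - (x : ℂ)) ^ (v - 1) := by
  rw [Complex.betaIntegral, intervalIntegral.integral_of_le zero_le_one,
    integral_Ioc_eq_integral_Ioo]

lemma image_div_one_add_Ioi : (fun t : ℝ => t / (1 + t)) '' Ioi 0 = Ioo 0 1 := by
  ext x
  constructor
  · rintro ⟨t, ht : 0 < t, rfl⟩
    exact ⟨by positivity, (div_lt_one (by linarith)).2 (by linarith)⟩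
  · rintro ⟨hx0, hx1⟩
    refine ⟨x / (1 - x), div_pos hx0 (by linarith), ?_⟩
    have : 1 - x ≠ 0 := by linarith
    field_simp
    ring

lemma strictMonoOn_div_one_add : StrictMonoOn (fun t : ℝ => t / (1 + t)) (Ioi 0) := by
  intro a (ha : 0 < a) b (hb : 0 < b) hab
  rw [div_lt_div_iff₀ (by linarith) (by linarith)]
  nlinarith

lemma hasDerivAt_div_one_add {t : ℝ} (ht : 1 + t ≠ 0) :
    HasDerivAt (fun t : ℝ => t / (1 + t)) (1 / (1 + t) ^ 2) t :=
  ((hasDerivAt_id' t).div ((hasDerivAt_id' t).const_add 1) ht).congr_deriv (by ring)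

lemma mellin_inv_one_add_eq_betaIntegral (s : ℂ) :
    mellin (fun t : ℝ => (1 + (t : ℂ))⁻¹) s = Complex.betaIntegral s (1 - s) := by
  rw [Complex.betaIntegral_eq_setIntegral_Ioo, ← image_div_one_add_Ioi,
    integral_image_eq_integral_abs_deriv_smul measurableSet_Ioi
      (fun t ht => (hasDerivAt_div_one_add (by linarith [mem_Ioi.1 ht])).hasDerivWithinAt)
      strictMonoOn_div_one_add.injOn, mellin]
  refine setIntegral_congr_fun measurableSet_Ioi fun t (ht : 0 < t) => ?_
  have h1t : (0 : ℝ) < 1 + t := by linarith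
  have hne : ((1 + t : ℝ) : ℂ) ≠ 0 := by exact_mod_cast h1t.ne'
  have hsub : 1 - ((t / (1 + t) : ℝ) : ℂ) = (((1 + t : ℝ) : ℂ))⁻¹ := by
    push_cast at hne ⊢
    field_simp
    ring
  rw [abs_of_pos (by positivity), hsub, Complex.ofReal_div,
    Complex.div_cpow_ofReal_nonneg ht.le h1t.le, Complex.inv_cpow_ofReal_nonneg h1t.le,
    show (1 : ℂ) - s - 1 = -s by ring, Complex.cpow_neg, Complex.cpow_sub _ _ hne,
    Complex.cpow_one, Complex.real_smul, smul_eq_mul]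
  have hs : ((1 + t : ℝ) : ℂ) ^ s ≠ 0 := Complex.cpow_ne_zero_iff.2 (Or.inl hne)
  push_cast at hne hs ⊢
  field_simp

lemma mellin_inv_one_add {s : ℂ} (hs0 : 0 < s.re) (hs1 : s.re < 1) :
    mellin (fun t : ℝ => (1 + (t : ℂ))⁻¹) s = π / Complex.sin (π * s) := by
  rw [mellin_inv_one_add_eq_betaIntegral,
    Complex.betaIntegral_eq_Gamma_mul_div _ _ hs0 (by simpa using hs1), add_sub_cancel,
    Complex.Gamma_one, div_one, Complex.Gamma_mul_Gamma_one_sub]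

lemma inv_cosh_eq_exp_neg_div (a : ℝ) : (cosh a)⁻¹ = 2 * exp (-a) / (1 + exp (-a) ^ 2) := by
  have h : exp a * exp (-a) = 1 := by rw [← exp_add, add_neg_cancel, exp_zero]
  rw [cosh_eq, inv_div, div_eq_div_iff (by positivity) (by positivity)]
  linear_combination (-2) * h

theorem fourier_inv_cosh_pi_mul (ξ : ℝ) :
    𝓕 (fun x : ℝ => (((cosh (π * x))⁻¹ : ℝ) : ℂ)) ξ = (((cosh (π * ξ))⁻¹ : ℝ) : ℂ) := by
  set s : ℂ := π + 2 * π * ξ * Complex.I with hs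
  have hre : s.re = π := by simp [hs]
  have him : s.im = 2 * π * ξ := by simp [hs]
  have h := mellin_eq_fourier (fun t : ℝ => (2 : ℂ) • (1 + ((t ^ (2 * π) : ℝ) : ℂ))⁻¹) (s := s)
  rw [hre, him, mul_div_cancel_left₀ _ (by positivity)] at h
  have hf : (fun x : ℝ => (((cosh (π * x))⁻¹ : ℝ) : ℂ)) =
      fun u => exp (-π * u) • (2 : ℂ) • (1 + ((exp (-u) ^ (2 * π) : ℝ) : ℂ))⁻¹ := by
    funext u
    have hpow : exp (-u) ^ (2 * π) = exp (-(π * u)) ^ 2 := by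
      rw [← exp_mul, sq, ← exp_add]
      ring_nf
    rw [hpow, neg_mul, Complex.real_smul, smul_eq_mul, inv_cosh_eq_exp_neg_div]
    push_cast
    ring
  have hs2 : s / ((2 * π : ℝ) : ℂ) = 1 / 2 + ξ * Complex.I := by
    rw [hs]
    field_simp
    push_cast
    ring
  have hsin : Complex.sin (π * (1 / 2 + ξ * Complex.I)) = cosh (π * ξ) := by
    rw [show (π : ℂ) * (1 / 2 + ξ * Complex.I) = ((π * ξ : ℝ) : ℂ) * Complex.I + π / 2 by
      push_cast; ring, Complex.sin_add_pi_div_two, Complex.cos_mul_I, Complex.ofReal_cosh]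
  rw [hf, ← h, mellin_const_smul, mellin_comp_rpow (fun t : ℝ => (1 + (t : ℂ))⁻¹), hs2,
    mellin_inv_one_add (by simp) (by norm_num), hsin, abs_of_pos (by positivity),
    Complex.real_smul, smul_eq_mul]
  push_cast
  field_simp

theorem stmt16 (ξ : ℝ) :
    ∫ x : ℝ, ((2 / (Real.exp (Real.pi * x) + Real.exp (-(Real.pi * x))) : ℝ) : ℂ) *
        Complex.exp (-2 * Real.pi * Complex.I * ξ * x) =
      ((2 / (Real.exp (Real.pi * ξ) + Real.exp (-(Real.pi * ξ))) : ℝ) : ℂ) := by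
  have h := fourier_inv_cosh_pi_mul ξ
  simp only [cosh_eq, inv_div, fourier_real_eq_integral_exp_smul, smul_eq_mul] at h
  rw [← h]
  congr 1 with x
  push_cast
  ring_nf
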